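/- Suppose Ω ⊂ ℝ^n satisfies the Ahlfors regularity condition |B_ρ(x₀) ∩ Ω| ≥ k_Ω ρ^n for all x₀ ∈ closure(Ω) and ρ ≤ diam(Ω). If f ∈ L¹(Ω, ℝ^N) and there exist h ∈ L^p(Ω) (p > 1) and R₀ > 0 such that ⨍_{B_ρ(x₀) ∩ Ω} |f - (f)_{B_ρ(x₀) ∩ Ω}| dx ≤ ρ^θ h(x₀) for almost all x₀ ∈ closure(Ω) and all ρ ≤ R₀, then f ∈ M^{θ,p}(Ω, ℝ^N), i.e. there exists g̃ ∈ L^p(Ω) with |f(x) - f(y)| ≤ c(n, k_Ω, θ) |x-y|^θ (g̃(x) + g̃(y)) for a.e. x, y ∈ Ω. -/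

import Mathlib

set_option maxHeartbeats 2000000


open MeasureTheory

/-- Suppose `Ω ⊂ ℝ^n` satisfies the Ahlfors regularity condition
`|B_ρ(x₀) ∩ Ω| ≥ k_Ω ρ^n` for all `x₀ ∈ closure Ω` and `ρ ≤ diam Ω`.
If `f ∈ L¹(Ω, ℝ^N)` and there are `h ∈ L^p(Ω)` (`p > 1`) and `R₀ > 0` with
`⨍_{B_ρ(x₀) ∩ Ω} |f - (f)_{B_ρ(x₀) ∩ Ω}| ≤ ρ^θ h(x₀)` for a.e. `x₀ ∈ closure Ω`
and all `ρ ≤ R₀`, then `f ∈ M^{θ,p}(Ω, ℝ^N)`: there is `g̃ ∈ L^p(Ω)`, `g̃ ≥ 0`, with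
`|f(x) - f(y)| ≤ c(n,k_Ω,θ) |x-y|^θ (g̃(x) + g̃(y))` for a.e. `x, y ∈ Ω`. -/
theorem stmt5 {n N : ℕ} (Ω : Set (EuclideanSpace ℝ (Fin n))) (hΩo : IsOpen Ω)
    (hΩb : Bornology.IsBounded Ω) (kΩ : ℝ) (hkΩ : 0 < kΩ)
    (hAhlfors : ∀ x₀ ∈ closure Ω, ∀ ρ : ℝ, 0 < ρ → ρ ≤ Metric.diam Ω →
      ENNReal.ofReal (kΩ * ρ ^ n) ≤ volume (Metric.ball x₀ ρ ∩ Ω))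
    (θ p : ℝ) (hθ : θ ∈ Set.Ioc (0:ℝ) 1) (hp : 1 < p)
    (f : EuclideanSpace ℝ (Fin n) → EuclideanSpace ℝ (Fin N))
    (hf : IntegrableOn f Ω volume)
    (h : EuclideanSpace ℝ (Fin n) → ℝ)
    (hh : MemLp h (ENNReal.ofReal p) (volume.restrict Ω))
    (R₀ : ℝ) (hR₀ : 0 < R₀)
    (hdev : ∀ᵐ x₀ ∂(volume.restrict (closure Ω)), ∀ ρ : ℝ, 0 < ρ → ρ ≤ R₀ →
      (⨍ x in Metric.ball x₀ ρ ∩ Ω, ‖f x - ⨍ y in Metric.ball x₀ ρ ∩ Ω, f y‖)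
        ≤ ρ ^ θ * h x₀) :
    ∃ (c : ℝ) (g : EuclideanSpace ℝ (Fin n) → ℝ), 0 < c ∧
      MemLp g (ENNReal.ofReal p) (volume.restrict Ω) ∧ (∀ x, 0 ≤ g x) ∧
      ∃ E : Set (EuclideanSpace ℝ (Fin n)), volume E = 0 ∧
        ∀ x ∈ Ω \ E, ∀ y ∈ Ω \ E, ‖f x - f y‖ ≤ c * ‖x - y‖ ^ θ * (g x + g y) := by
  classical
  obtain ⟨hθ0, hθ1⟩ := hθ
  have hΩm : MeasurableSet Ω := hΩo.measurableSet
  have hd0 : 0 ≤ Metric.diam Ω := Metric.diam_nonneg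
  set d : ℝ := Metric.diam Ω with hd
  set ωn : ℝ := (volume (Metric.ball (0 : EuclideanSpace ℝ (Fin n)) 1)).toReal with hωn
  have hωn0 : 0 < ωn :=
    ENNReal.toReal_pos (Metric.measure_ball_pos _ _ one_pos).ne' measure_ball_lt_top.ne
  set q : ℝ := (2 : ℝ) ^ (-θ) with hqdef
  have hq0 : 0 ≤ q := Real.rpow_nonneg (by norm_num) _
  have hq1 : q < 1 := Real.rpow_lt_one_of_one_lt_of_neg one_lt_two (by linarith)
  set Cg : ℝ := (1 - q)⁻¹ with hCgdef
  have hCg0 : 0 < Cg := inv_pos.2 (by linarith)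
  set C0 : ℝ := ωn * 2 ^ n / kΩ with hC0def
  have hC00 : 0 < C0 := by positivity
  set C1 : ℝ := C0 * Cg with hC1def
  have hC10 : 0 < C1 := mul_pos hC00 hCg0
  set ρ₁ : ℝ := min R₀ d / 2 with hρ₁def
  have hρ₁0 : 0 ≤ ρ₁ := by
    have : (0:ℝ) ≤ min R₀ d := le_min hR₀.le hd0
    rw [hρ₁def]; linarith
  set K : ℝ := (∫ z in Ω, ‖f z‖) / (kΩ * ρ₁ ^ n) with hKdef
  set K₂ : ℝ := K / ρ₁ ^ θ with hK₂def
  have hintf0 : 0 ≤ ∫ z in Ω, ‖f z‖ := integral_nonneg fun z => norm_nonneg _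
  have hK₂0 : 0 ≤ K₂ := by
    rcases eq_or_lt_of_le hρ₁0 with h0 | h0
    · rw [hK₂def, ← h0, Real.zero_rpow hθ0.ne', div_zero]
    · exact div_nonneg (div_nonneg hintf0 (by positivity)) (Real.rpow_nonneg hρ₁0 _)
  set g : EuclideanSpace ℝ (Fin n) → ℝ := fun z => |h z| + K₂ with hgdef
  have hgnn : ∀ z, 0 ≤ g z := fun z => add_nonneg (abs_nonneg _) hK₂0
  set c : ℝ := 2 * (C0 + C1 + 1) with hcdef
  have hc0 : 0 < c := by rw [hcdef]; linarith
  haveI hfinΩ : IsFiniteMeasure (volume.restrict Ω) := by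
    constructor
    rw [Measure.restrict_apply_univ]
    obtain ⟨R, hR⟩ := hΩb.subset_closedBall 0
    exact lt_of_le_of_lt (measure_mono hR) measure_closedBall_lt_top
  have hgLp : MemLp g (ENNReal.ofReal p) (volume.restrict Ω) := by
    have h1 : MemLp (fun z => |h z|) (ENNReal.ofReal p) (volume.restrict Ω) := by
      simpa [Real.norm_eq_abs] using hh.norm
    exact h1.add (memLp_const K₂)
  set f' : EuclideanSpace ℝ (Fin n) → EuclideanSpace ℝ (Fin N) := Ω.indicator f with hf'def
  have hf'int : Integrable f' := (integrable_indicator_iff hΩm).2 hf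
  have h2mtend : ∀ ρ : ℝ, 0 < ρ →
      Filter.Tendsto (fun m : ℕ => ρ / 2 ^ m) Filter.atTop (nhdsWithin 0 (Set.Ioi 0)) := by
    intro ρ hρ
    apply tendsto_nhdsWithin_of_tendsto_nhds_of_eventually_within
    · have h1 : Filter.Tendsto (fun m : ℕ => ((1:ℝ)/2) ^ m) Filter.atTop (nhds 0) :=
        tendsto_pow_atTop_nhds_zero_of_lt_one (by norm_num) (by norm_num)
      have h2 := h1.const_mul ρ
      simp only [mul_zero] at h2
      convert h2 using 2 with m
      rw [div_pow, one_pow, mul_one_div]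
    · filter_upwards with m
      exact div_pos hρ (by positivity)
  have hLae : ∀ᵐ z ∂(volume : Measure (EuclideanSpace ℝ (Fin n))), ∀ ρ : ℝ, 0 < ρ →
      Filter.Tendsto (fun m : ℕ => ⨍ w in Metric.closedBall z (ρ / 2 ^ m), ‖f' w - f' z‖)
        Filter.atTop (nhds 0) := by
    filter_upwards [IsUnifLocDoublingMeasure.ae_tendsto_average_norm_sub
      (μ := (volume : Measure (EuclideanSpace ℝ (Fin n)))) hf'int.locallyIntegrable 1] with z hz
    intro ρ hρ
    exact hz (fun _ => z) (fun m => ρ / 2 ^ m) (h2mtend ρ hρ)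
      (by filter_upwards with m; exact Metric.mem_closedBall_self (by positivity))
  have hgood : ∀ᵐ z ∂(volume.restrict Ω),
      (∀ ρ : ℝ, 0 < ρ → ρ ≤ R₀ →
        (⨍ w in Metric.ball z ρ ∩ Ω, ‖f w - ⨍ v in Metric.ball z ρ ∩ Ω, f v‖) ≤ ρ ^ θ * h z) ∧
      (∀ ρ : ℝ, 0 < ρ →
        Filter.Tendsto (fun m : ℕ => ⨍ w in Metric.closedBall z (ρ / 2 ^ m), ‖f' w - f' z‖)
          Filter.atTop (nhds 0)) :=
    (ae_restrict_of_ae_restrict_of_subset subset_closure hdev).and (ae_restrict_of_ae hLae)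
  rw [MeasureTheory.ae_iff] at hgood
  obtain ⟨t, hts, htm, ht0⟩ := exists_measurable_superset_of_null hgood
  refine ⟨c, g, hc0, hgLp, hgnn, t ∩ Ω, ?_, ?_⟩
  · have ht' : volume (t ∩ Ω) = volume.restrict Ω t := (Measure.restrict_apply htm).symm
    rw [ht', ht0]
  have hQ : ∀ w ∈ Ω \ (t ∩ Ω),
      (∀ ρ : ℝ, 0 < ρ → ρ ≤ R₀ →
        (⨍ v in Metric.ball w ρ ∩ Ω, ‖f v - ⨍ v' in Metric.ball w ρ ∩ Ω, f v'‖) ≤ ρ ^ θ * h w) ∧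
      (∀ ρ : ℝ, 0 < ρ →
        Filter.Tendsto (fun m : ℕ => ⨍ v in Metric.closedBall w (ρ / 2 ^ m), ‖f' v - f' w‖)
          Filter.atTop (nhds 0)) := by
    intro w hw
    by_contra hcon
    exact hw.2 ⟨hts hcon, hw.1⟩
  intro x hx y hy
  obtain ⟨hPx, hLx⟩ := hQ x hx
  obtain ⟨hPy, hLy⟩ := hQ y hy
  have hxΩ := hx.1
  have hyΩ := hy.1
  rcases eq_or_ne x y with rfl | hxy
  · simp [Real.zero_rpow hθ0.ne']
  haveI : Nontrivial (EuclideanSpace ℝ (Fin n)) := ⟨⟨x, y, hxy⟩⟩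
  set r : ℝ := ‖x - y‖ with hrdef
  have hr0 : 0 < r := by rw [hrdef]; exact norm_pos_iff.2 (sub_ne_zero.2 hxy)
  have hrd : r ≤ d := by
    rw [hrdef, ← dist_eq_norm]; exact Metric.dist_le_diam_of_mem hΩb hxΩ hyΩ
  have hd0' : 0 < d := lt_of_lt_of_le hr0 hrd
  -- basic measure estimates
  have hvol_fin : ∀ (z : EuclideanSpace ℝ (Fin n)) (s : ℝ),
      volume (Metric.ball z s ∩ Ω) < ⊤ :=
    fun z s => lt_of_le_of_lt (measure_mono Set.inter_subset_left) measure_ball_lt_top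
  have hvol_ub : ∀ (z : EuclideanSpace ℝ (Fin n)) (s : ℝ), 0 ≤ s →
      (volume (Metric.ball z s ∩ Ω)).toReal ≤ ωn * s ^ n := by
    intro z s hs
    have h1 : (volume (Metric.ball z s ∩ Ω)).toReal ≤ (volume (Metric.ball z s)).toReal :=
      ENNReal.toReal_mono measure_ball_lt_top.ne (measure_mono Set.inter_subset_left)
    have h2 : volume (Metric.ball z s)
        = ENNReal.ofReal (s ^ n) * volume (Metric.ball (0 : EuclideanSpace ℝ (Fin n)) 1) := by
      rw [Measure.addHaar_ball _ _ hs, finrank_euclideanSpace_fin]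
    rw [h2, ENNReal.toReal_mul, ENNReal.toReal_ofReal (by positivity)] at h1
    calc (volume (Metric.ball z s ∩ Ω)).toReal ≤ s ^ n * ωn := h1
      _ = ωn * s ^ n := mul_comm _ _
  have hvol_lb : ∀ z ∈ closure Ω, ∀ s : ℝ, 0 < s → s ≤ d →
      kΩ * s ^ n ≤ (volume (Metric.ball z s ∩ Ω)).toReal := by
    intro z hz s hs hsd
    have h1 := hAhlfors z hz s hs hsd
    calc kΩ * s ^ n = (ENNReal.ofReal (kΩ * s ^ n)).toReal :=
          (ENNReal.toReal_ofReal (by positivity)).symm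
      _ ≤ (volume (Metric.ball z s ∩ Ω)).toReal := ENNReal.toReal_mono (hvol_fin z s).ne h1
  -- comparison lemma for averages over nested intersected balls
  have lemB : ∀ x₀ x₁ : EuclideanSpace ℝ (Fin n), x₁ ∈ Ω →
      (∀ ρ : ℝ, 0 < ρ → ρ ≤ R₀ →
        (⨍ v in Metric.ball x₀ ρ ∩ Ω, ‖f v - ⨍ v' in Metric.ball x₀ ρ ∩ Ω, f v'‖) ≤ ρ ^ θ * h x₀) →
      ∀ s u : ℝ, 0 < s → s ≤ d → s ≤ u → u ≤ R₀ → Metric.ball x₁ s ⊆ Metric.ball x₀ u →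
      ‖(⨍ z in Metric.ball x₁ s ∩ Ω, f z) - ⨍ z in Metric.ball x₀ u ∩ Ω, f z‖
        ≤ (ωn * u ^ n / (kΩ * s ^ n)) * (u ^ θ * |h x₀|) := by
    intro x₀ x₁ hx₁ hP₀ s u hs hsd hsu huR hsub
    set S := Metric.ball x₁ s ∩ Ω with hSdef
    set T := Metric.ball x₀ u ∩ Ω with hTdef
    have hST : S ⊆ T := Set.inter_subset_inter_left _ hsub
    have hμS_lb : kΩ * s ^ n ≤ (volume S).toReal := hvol_lb x₁ (subset_closure hx₁) s hs hsd
    have hμS0 : 0 < (volume S).toReal := lt_of_lt_of_le (by positivity) hμS_lb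
    have hμT0 : 0 < (volume T).toReal :=
      lt_of_lt_of_le hμS0 (ENNReal.toReal_mono (hvol_fin _ _).ne (measure_mono hST))
    have hfT : IntegrableOn f T volume := hf.mono_set Set.inter_subset_right
    have hfS : IntegrableOn f S volume := hfT.mono_set hST
    set cT := ⨍ z in T, f z with hcTdef
    have hconstS : IntegrableOn (fun _ => cT) S volume :=
      integrableOn_const (hvol_fin _ _).ne
    have key : (⨍ z in S, f z) - cT = (volume S).toReal⁻¹ • ∫ z in S, (f z - cT) := by
      rw [integral_sub hfS hconstS, setIntegral_const, measureReal_def, smul_sub, smul_smul,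
        inv_mul_cancel₀ hμS0.ne', one_smul, setAverage_eq, measureReal_def]
    rw [key, norm_smul, Real.norm_eq_abs, abs_of_nonneg (inv_nonneg.2 ENNReal.toReal_nonneg)]
    have h1 : ‖∫ z in S, (f z - cT)‖ ≤ ∫ z in S, ‖f z - cT‖ := norm_integral_le_integral_norm _
    have hsubint : IntegrableOn (fun z => ‖f z - cT‖) T volume :=
      (hfT.sub (integrableOn_const (hvol_fin _ _).ne)).norm
    have h2 : ∫ z in S, ‖f z - cT‖ ≤ ∫ z in T, ‖f z - cT‖ :=
      setIntegral_mono_set hsubint (Filter.Eventually.of_forall fun z => norm_nonneg _)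
        (HasSubset.Subset.eventuallyLE hST)
    have h3 : ∫ z in T, ‖f z - cT‖ = (volume T).toReal * ⨍ z in T, ‖f z - cT‖ := by
      rw [setAverage_eq, measureReal_def, smul_eq_mul, ← mul_assoc, mul_inv_cancel₀ hμT0.ne', one_mul]
    have hu0 : (0:ℝ) ≤ u := hs.le.trans hsu
    have hX0 : 0 ≤ u ^ θ * |h x₀| := mul_nonneg (Real.rpow_nonneg hu0 _) (abs_nonneg _)
    have h4 : (⨍ z in T, ‖f z - cT‖) ≤ u ^ θ * |h x₀| := by
      refine (hP₀ u (lt_of_lt_of_le hs hsu) huR).trans ?_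
      exact mul_le_mul_of_nonneg_left (le_abs_self _) (Real.rpow_nonneg hu0 _)
    have hμT_ub : (volume T).toReal ≤ ωn * u ^ n := hvol_ub x₀ u hu0
    calc (volume S).toReal⁻¹ * ‖∫ z in S, (f z - cT)‖
        ≤ (volume S).toReal⁻¹ * ((volume T).toReal * (u ^ θ * |h x₀|)) := by
          refine mul_le_mul_of_nonneg_left ?_ (inv_nonneg.2 ENNReal.toReal_nonneg)
          calc ‖∫ z in S, (f z - cT)‖ ≤ ∫ z in T, ‖f z - cT‖ := h1.trans h2
            _ = (volume T).toReal * ⨍ z in T, ‖f z - cT‖ := h3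
            _ ≤ (volume T).toReal * (u ^ θ * |h x₀|) :=
                mul_le_mul_of_nonneg_left h4 ENNReal.toReal_nonneg
      _ ≤ (kΩ * s ^ n)⁻¹ * ((ωn * u ^ n) * (u ^ θ * |h x₀|)) := by
          refine mul_le_mul (inv_anti₀ (by positivity) hμS_lb)
            (mul_le_mul_of_nonneg_right hμT_ub hX0)
            (mul_nonneg ENNReal.toReal_nonneg hX0) (inv_nonneg.2 (by positivity))
      _ = (ωn * u ^ n / (kΩ * s ^ n)) * (u ^ θ * |h x₀|) := by ring
  -- geometric series bound
  have hgeom : ∀ m : ℕ, (∑ i ∈ Finset.range m, q ^ i) ≤ Cg := by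
    intro m
    rw [hCgdef, ← tsum_geometric_of_lt_one hq0 hq1]
    exact Summable.sum_le_tsum _ (fun i _ => pow_nonneg hq0 _) (summable_geometric_of_lt_one hq0 hq1)
  have hpowq : ∀ (ρ : ℝ), 0 < ρ → ∀ i : ℕ, (ρ / 2 ^ i) ^ θ = ρ ^ θ * q ^ i := by
    intro ρ hρ i
    rw [Real.div_rpow hρ.le (by positivity)]
    have h1 : ((2:ℝ) ^ i) ^ θ = ((2:ℝ) ^ θ) ^ i := by
      rw [← Real.rpow_natCast (2:ℝ) i, ← Real.rpow_natCast ((2:ℝ) ^ θ) i,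
        ← Real.rpow_mul (by norm_num), ← Real.rpow_mul (by norm_num), mul_comm]
    rw [h1, hqdef, Real.rpow_neg (by norm_num), inv_pow, div_eq_mul_inv]
  -- the chain (telescoping) lemma
  have lemA : ∀ z ∈ Ω,
      (∀ ρ : ℝ, 0 < ρ → ρ ≤ R₀ →
        (⨍ v in Metric.ball z ρ ∩ Ω, ‖f v - ⨍ v' in Metric.ball z ρ ∩ Ω, f v'‖) ≤ ρ ^ θ * h z) →
      (∀ ρ : ℝ, 0 < ρ →
        Filter.Tendsto (fun m : ℕ => ⨍ v in Metric.closedBall z (ρ / 2 ^ m), ‖f' v - f' z‖)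
          Filter.atTop (nhds 0)) →
      ∀ ρ : ℝ, 0 < ρ → ρ ≤ R₀ → ρ ≤ 2 * d →
      ‖f z - ⨍ w in Metric.ball z ρ ∩ Ω, f w‖ ≤ C1 * (ρ ^ θ * |h z|) := by
    intro z hz hPz hLz ρ hρ hρR hρd
    set a : ℕ → EuclideanSpace ℝ (Fin N) :=
      fun m => ⨍ w in Metric.ball z (ρ / 2 ^ m) ∩ Ω, f w with ha
    have hstep : ∀ m : ℕ, ‖a (m + 1) - a m‖ ≤ C0 * ((ρ / 2 ^ m) ^ θ * |h z|) := by
      intro m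
      have hs : 0 < ρ / 2 ^ (m + 1) := by positivity
      have h21 : (2:ℝ) ≤ 2 ^ (m + 1) := by
        calc (2:ℝ) = 2 ^ 1 := (pow_one 2).symm
          _ ≤ 2 ^ (m + 1) := pow_le_pow_right₀ one_le_two (by omega)
      have hsd : ρ / 2 ^ (m + 1) ≤ d := by
        have h22 : ρ / 2 ^ (m + 1) ≤ ρ / 2 := by
          apply div_le_div_of_nonneg_left hρ.le two_pos h21
        linarith
      have hst : ρ / 2 ^ (m + 1) ≤ ρ / 2 ^ m := by
        apply div_le_div_of_nonneg_left hρ.le (by positivity)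
        exact pow_le_pow_right₀ one_le_two (by omega)
      have htR : ρ / 2 ^ m ≤ R₀ :=
        le_trans (div_le_self hρ.le (one_le_pow₀ one_le_two)) hρR
      have hcomp := lemB z z hz hPz _ _ hs hsd hst htR (Metric.ball_subset_ball hst)
      have hpow2 : (ρ / 2 ^ m) = 2 * (ρ / 2 ^ (m + 1)) := by
        rw [pow_succ]; field_simp
      have hratio : ωn * (ρ / 2 ^ m) ^ n / (kΩ * (ρ / 2 ^ (m + 1)) ^ n) = C0 := by
        rw [hC0def, hpow2, mul_pow]
        have hne : ((ρ / 2 ^ (m + 1)) ^ n : ℝ) ≠ 0 := by positivity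
        field_simp
      rw [hratio] at hcomp
      simpa [ha] using hcomp
    have hsum : ∀ m : ℕ, ‖a m - a 0‖ ≤ C1 * (ρ ^ θ * |h z|) := by
      intro m
      calc ‖a m - a 0‖ = dist (a 0) (a m) := by rw [dist_eq_norm, norm_sub_rev]
        _ ≤ ∑ i ∈ Finset.range m, dist (a i) (a (i + 1)) := dist_le_range_sum_dist a m
        _ ≤ ∑ i ∈ Finset.range m, C0 * (ρ ^ θ * q ^ i * |h z|) := by
            apply Finset.sum_le_sum
            intro i _
            rw [dist_eq_norm, norm_sub_rev]
            calc ‖a (i + 1) - a i‖ ≤ C0 * ((ρ / 2 ^ i) ^ θ * |h z|) := hstep i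
              _ = C0 * (ρ ^ θ * q ^ i * |h z|) := by rw [hpowq ρ hρ i]
        _ = (C0 * ρ ^ θ * |h z|) * ∑ i ∈ Finset.range m, q ^ i := by
            rw [Finset.mul_sum]
            exact Finset.sum_congr rfl fun i _ => by ring
        _ ≤ (C0 * ρ ^ θ * |h z|) * Cg := by
            refine mul_le_mul_of_nonneg_left (hgeom m) ?_
            exact mul_nonneg (mul_nonneg hC00.le (Real.rpow_nonneg hρ.le _)) (abs_nonneg _)
        _ = C1 * (ρ ^ θ * |h z|) := by rw [hC1def]; ring
    -- limit of the averages
    obtain ⟨ε, hε, hball⟩ := Metric.isOpen_iff.1 hΩo z hz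
    have hm0 : Filter.Tendsto (fun m : ℕ => ρ / 2 ^ m) Filter.atTop (nhds 0) :=
      Filter.Tendsto.mono_right (h2mtend ρ hρ) nhdsWithin_le_nhds
    have hmev : ∀ᶠ m in Filter.atTop, ρ / 2 ^ m < ε := hm0.eventually (gt_mem_nhds hε)
    have hbound : ∀ᶠ m in Filter.atTop,
        ‖a m - f z‖ ≤ ⨍ w in Metric.closedBall z (ρ / 2 ^ m), ‖f' w - f' z‖ := by
      filter_upwards [hmev] with m hm
      have hBsub : Metric.ball z (ρ / 2 ^ m) ⊆ Ω := (Metric.ball_subset_ball hm.le).trans hball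
      have hBeq : Metric.ball z (ρ / 2 ^ m) ∩ Ω = Metric.ball z (ρ / 2 ^ m) :=
        Set.inter_eq_left.2 hBsub
      have hρm : (0:ℝ) < ρ / 2 ^ m := by positivity
      have hμB0 : 0 < (volume (Metric.ball z (ρ / 2 ^ m))).toReal :=
        ENNReal.toReal_pos (Metric.measure_ball_pos _ _ hρm).ne' measure_ball_lt_top.ne
      have hfB : IntegrableOn f (Metric.ball z (ρ / 2 ^ m)) volume := hf.mono_set hBsub
      have hconstB : IntegrableOn (fun _ => f z) (Metric.ball z (ρ / 2 ^ m)) volume :=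
        integrableOn_const measure_ball_lt_top.ne
      have key : a m - f z
          = (volume (Metric.ball z (ρ / 2 ^ m))).toReal⁻¹
            • ∫ w in Metric.ball z (ρ / 2 ^ m), (f w - f z) := by
        rw [ha]
        simp only []
        rw [hBeq, integral_sub hfB hconstB, setIntegral_const, measureReal_def, smul_sub, smul_smul,
          inv_mul_cancel₀ hμB0.ne', one_smul, setAverage_eq, measureReal_def]
      have h1 : ‖a m - f z‖ ≤ ⨍ w in Metric.ball z (ρ / 2 ^ m), ‖f w - f z‖ := by
        rw [key, setAverage_eq, norm_smul, Real.norm_eq_abs,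
          abs_of_nonneg (inv_nonneg.2 ENNReal.toReal_nonneg), smul_eq_mul]
        exact mul_le_mul_of_nonneg_left (norm_integral_le_integral_norm _)
          (inv_nonneg.2 ENNReal.toReal_nonneg)
      have h2 : (⨍ w in Metric.ball z (ρ / 2 ^ m), ‖f w - f z‖)
          = ⨍ w in Metric.ball z (ρ / 2 ^ m), ‖f' w - f' z‖ := by
        have hzeq : f' z = f z := Set.indicator_of_mem hz f
        rw [setAverage_eq, setAverage_eq]
        congr 1
        apply setIntegral_congr_fun measurableSet_ball
        intro w hw
        simp only [hf'def, Set.indicator_of_mem (hBsub hw), Set.indicator_of_mem hz]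
      have h3 : (⨍ w in Metric.ball z (ρ / 2 ^ m), ‖f' w - f' z‖)
          = ⨍ w in Metric.closedBall z (ρ / 2 ^ m), ‖f' w - f' z‖ := by
        apply setAverage_congr
        rw [MeasureTheory.ae_eq_set]
        constructor
        · rw [Set.diff_eq_empty.2 Metric.ball_subset_closedBall]; exact measure_empty
        · rw [Metric.closedBall_diff_ball]
          exact Measure.addHaar_sphere volume z _
      rw [← h3, ← h2]
      exact h1
    have htendB := hLz ρ hρ
    have hsq : Filter.Tendsto (fun m : ℕ => a m - f z) Filter.atTop (nhds 0) :=
      squeeze_zero_norm' hbound htendB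
    have hlim : Filter.Tendsto a Filter.atTop (nhds (f z)) := by
      have h5 := hsq.add_const (f z)
      simpa using h5
    have hnorm : Filter.Tendsto (fun m => ‖a m - a 0‖) Filter.atTop (nhds (‖f z - a 0‖)) :=
      ((hlim.sub_const (a 0)).norm)
    have hfin := le_of_tendsto hnorm (Filter.Eventually.of_forall hsum)
    simpa [ha] using hfin
  -- now the two cases
  have hrθ : 0 ≤ r ^ θ := Real.rpow_nonneg hr0.le _
  have hgx : g x = |h x| + K₂ := rfl
  have hgy : g y = |h y| + K₂ := rfl
  have habsx : 0 ≤ |h x| := abs_nonneg _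
  have habsy : 0 ≤ |h y| := abs_nonneg _
  rcases le_or_gt r ρ₁ with hcase | hcase
  · -- near case : r ≤ ρ₁
    have hminR : min R₀ d ≤ R₀ := min_le_left _ _
    have hρ₁val : ρ₁ = min R₀ d / 2 := hρ₁def
    have hrR : r ≤ R₀ := by rw [hρ₁val] at hcase; linarith
    have h2rR : 2 * r ≤ R₀ := by rw [hρ₁val] at hcase; linarith
    have hT1 : ‖f x - ⨍ w in Metric.ball x r ∩ Ω, f w‖ ≤ C1 * (r ^ θ * |h x|) :=
      lemA x hxΩ hPx hLx r hr0 hrR (by linarith)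
    have hT3 : ‖f y - ⨍ w in Metric.ball y (2 * r) ∩ Ω, f w‖ ≤ C1 * ((2 * r) ^ θ * |h y|) :=
      lemA y hyΩ hPy hLy (2 * r) (by linarith) h2rR (by linarith)
    have hsubB : Metric.ball x r ⊆ Metric.ball y (2 * r) := by
      apply Metric.ball_subset_ball'
      rw [dist_eq_norm, ← hrdef]
      linarith
    have hT2 : ‖(⨍ w in Metric.ball x r ∩ Ω, f w) - ⨍ w in Metric.ball y (2 * r) ∩ Ω, f w‖
        ≤ (ωn * (2 * r) ^ n / (kΩ * r ^ n)) * ((2 * r) ^ θ * |h y|) :=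
      lemB y x hxΩ hPy r (2 * r) hr0 hrd (by linarith) h2rR hsubB
    have hratio : ωn * (2 * r) ^ n / (kΩ * r ^ n) = C0 := by
      rw [hC0def, mul_pow]
      have hne : (r ^ n : ℝ) ≠ 0 := by positivity
      field_simp
    rw [hratio] at hT2
    have h2θ : (2 * r) ^ θ ≤ 2 * r ^ θ := by
      rw [Real.mul_rpow (by norm_num) hr0.le]
      have h2θ' : (2:ℝ) ^ θ ≤ 2 := by
        calc (2:ℝ) ^ θ ≤ 2 ^ (1:ℝ) := Real.rpow_le_rpow_of_exponent_le one_le_two hθ1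
          _ = 2 := Real.rpow_one 2
      exact mul_le_mul_of_nonneg_right h2θ' (Real.rpow_nonneg hr0.le _)
    have hT2' : ‖(⨍ w in Metric.ball x r ∩ Ω, f w) - ⨍ w in Metric.ball y (2 * r) ∩ Ω, f w‖
        ≤ C0 * (2 * r ^ θ * |h y|) := by
      refine hT2.trans ?_
      exact mul_le_mul_of_nonneg_left (mul_le_mul_of_nonneg_right h2θ habsy) hC00.le
    have hT3' : ‖f y - ⨍ w in Metric.ball y (2 * r) ∩ Ω, f w‖ ≤ C1 * (2 * r ^ θ * |h y|) := by
      refine hT3.trans ?_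
      exact mul_le_mul_of_nonneg_left (mul_le_mul_of_nonneg_right h2θ habsy) hC10.le
    have htri : ‖f x - f y‖
        ≤ ‖f x - ⨍ w in Metric.ball x r ∩ Ω, f w‖
          + ‖(⨍ w in Metric.ball x r ∩ Ω, f w) - ⨍ w in Metric.ball y (2 * r) ∩ Ω, f w‖
          + ‖f y - ⨍ w in Metric.ball y (2 * r) ∩ Ω, f w‖ := by
      have h4 := dist_triangle4 (f x) (⨍ w in Metric.ball x r ∩ Ω, f w)
        (⨍ w in Metric.ball y (2 * r) ∩ Ω, f w) (f y)
      rw [dist_eq_norm, dist_eq_norm, dist_eq_norm, dist_eq_norm] at h4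
      calc ‖f x - f y‖ ≤ _ := h4
        _ = _ := by rw [norm_sub_rev (⨍ w in Metric.ball y (2 * r) ∩ Ω, f w) (f y)]
    rw [hcdef, hgx, hgy]
    have hprod1 : 0 ≤ r ^ θ * |h x| := mul_nonneg hrθ habsx
    have hprod2 : 0 ≤ r ^ θ * |h y| := mul_nonneg hrθ habsy
    have hprod3 : 0 ≤ r ^ θ * K₂ := mul_nonneg hrθ hK₂0
    clear_value d ωn q Cg C0 C1 ρ₁ K K₂ g c f' r
    have e1 : C1 * (r ^ θ * |h x|) ≤ 2 * (C0 + C1 + 1) * (r ^ θ * |h x|) :=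
      mul_le_mul_of_nonneg_right (by linarith) hprod1
    have e2 : (C0 * 2 + C1 * 2) * (r ^ θ * |h y|) ≤ 2 * (C0 + C1 + 1) * (r ^ θ * |h y|) :=
      mul_le_mul_of_nonneg_right (by linarith) hprod2
    have e3 : (0:ℝ) ≤ 2 * (C0 + C1 + 1) * (2 * (r ^ θ * K₂)) :=
      mul_nonneg (by linarith) (by linarith [hprod3])
    calc ‖f x - f y‖
        ≤ C1 * (r ^ θ * |h x|) + C0 * (2 * r ^ θ * |h y|) + C1 * (2 * r ^ θ * |h y|) := by
          linarith [htri, hT1, hT2', hT3']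
      _ = C1 * (r ^ θ * |h x|) + (C0 * 2 + C1 * 2) * (r ^ θ * |h y|) := by ring
      _ ≤ 2 * (C0 + C1 + 1) * (r ^ θ * |h x|) + 2 * (C0 + C1 + 1) * (r ^ θ * |h y|)
          + 2 * (C0 + C1 + 1) * (2 * (r ^ θ * K₂)) := by linarith [e1, e2, e3]
      _ = 2 * (C0 + C1 + 1) * r ^ θ * (|h x| + K₂ + (|h y| + K₂)) := by ring
  · -- far case : ρ₁ < r
    have hmin0 : 0 < min R₀ d := lt_min hR₀ hd0'
    have hρ₁pos : 0 < ρ₁ := by rw [hρ₁def]; linarith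
    have hρ₁R : ρ₁ ≤ R₀ := by
      have := min_le_left R₀ d
      rw [hρ₁def]; linarith
    have hρ₁d : ρ₁ ≤ d := by
      have := min_le_right R₀ d
      rw [hρ₁def]; linarith
    have hT1 : ‖f x - ⨍ w in Metric.ball x ρ₁ ∩ Ω, f w‖ ≤ C1 * (ρ₁ ^ θ * |h x|) :=
      lemA x hxΩ hPx hLx ρ₁ hρ₁pos hρ₁R (by linarith)
    have hT3 : ‖f y - ⨍ w in Metric.ball y ρ₁ ∩ Ω, f w‖ ≤ C1 * (ρ₁ ^ θ * |h y|) :=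
      lemA y hyΩ hPy hLy ρ₁ hρ₁pos hρ₁R (by linarith)
    have hmono : ρ₁ ^ θ ≤ r ^ θ := Real.rpow_le_rpow hρ₁0 hcase.le hθ0.le
    have hT1' : ‖f x - ⨍ w in Metric.ball x ρ₁ ∩ Ω, f w‖ ≤ C1 * (r ^ θ * |h x|) := by
      refine hT1.trans ?_
      refine mul_le_mul_of_nonneg_left ?_ hC10.le
      exact mul_le_mul_of_nonneg_right hmono habsx
    have hT3' : ‖f y - ⨍ w in Metric.ball y ρ₁ ∩ Ω, f w‖ ≤ C1 * (r ^ θ * |h y|) := by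
      refine hT3.trans ?_
      refine mul_le_mul_of_nonneg_left ?_ hC10.le
      exact mul_le_mul_of_nonneg_right hmono habsy
    have hAbound : ∀ z ∈ Ω, ‖⨍ w in Metric.ball z ρ₁ ∩ Ω, f w‖ ≤ K := by
      intro z hz
      have hμ_lb : kΩ * ρ₁ ^ n ≤ (volume (Metric.ball z ρ₁ ∩ Ω)).toReal :=
        hvol_lb z (subset_closure hz) ρ₁ hρ₁pos hρ₁d
      rw [setAverage_eq, measureReal_def, norm_smul, Real.norm_eq_abs,
        abs_of_nonneg (inv_nonneg.2 ENNReal.toReal_nonneg)]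
      have h1 : ‖∫ w in Metric.ball z ρ₁ ∩ Ω, f w‖ ≤ ∫ w in Metric.ball z ρ₁ ∩ Ω, ‖f w‖ :=
        norm_integral_le_integral_norm _
      have h2 : ∫ w in Metric.ball z ρ₁ ∩ Ω, ‖f w‖ ≤ ∫ w in Ω, ‖f w‖ :=
        setIntegral_mono_set hf.norm (Filter.Eventually.of_forall fun w => norm_nonneg _)
          (HasSubset.Subset.eventuallyLE Set.inter_subset_right)
      calc (volume (Metric.ball z ρ₁ ∩ Ω)).toReal⁻¹ * ‖∫ w in Metric.ball z ρ₁ ∩ Ω, f w‖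
          ≤ (volume (Metric.ball z ρ₁ ∩ Ω)).toReal⁻¹ * ∫ w in Ω, ‖f w‖ :=
            mul_le_mul_of_nonneg_left (h1.trans h2) (inv_nonneg.2 ENNReal.toReal_nonneg)
        _ ≤ (kΩ * ρ₁ ^ n)⁻¹ * ∫ w in Ω, ‖f w‖ :=
            mul_le_mul_of_nonneg_right (inv_anti₀ (by positivity) hμ_lb) hintf0
        _ = K := by rw [hKdef, div_eq_mul_inv, mul_comm]
    have hK_le : K ≤ K₂ * r ^ θ := by
      have hKeq : K = K₂ * ρ₁ ^ θ := by
        rw [hK₂def, div_mul_cancel₀]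
        exact (Real.rpow_pos_of_pos hρ₁pos θ).ne'
      rw [hKeq]
      exact mul_le_mul_of_nonneg_left hmono hK₂0
    have hT2 : ‖(⨍ w in Metric.ball x ρ₁ ∩ Ω, f w) - ⨍ w in Metric.ball y ρ₁ ∩ Ω, f w‖
        ≤ 2 * K := by
      calc ‖(⨍ w in Metric.ball x ρ₁ ∩ Ω, f w) - ⨍ w in Metric.ball y ρ₁ ∩ Ω, f w‖
          ≤ ‖⨍ w in Metric.ball x ρ₁ ∩ Ω, f w‖ + ‖⨍ w in Metric.ball y ρ₁ ∩ Ω, f w‖ :=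
            norm_sub_le _ _
        _ ≤ 2 * K := by
            have := hAbound x hxΩ
            have := hAbound y hyΩ
            linarith
    have htri : ‖f x - f y‖
        ≤ ‖f x - ⨍ w in Metric.ball x ρ₁ ∩ Ω, f w‖
          + ‖(⨍ w in Metric.ball x ρ₁ ∩ Ω, f w) - ⨍ w in Metric.ball y ρ₁ ∩ Ω, f w‖
          + ‖f y - ⨍ w in Metric.ball y ρ₁ ∩ Ω, f w‖ := by
      have h4 := dist_triangle4 (f x) (⨍ w in Metric.ball x ρ₁ ∩ Ω, f w)
        (⨍ w in Metric.ball y ρ₁ ∩ Ω, f w) (f y)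
      rw [dist_eq_norm, dist_eq_norm, dist_eq_norm, dist_eq_norm] at h4
      calc ‖f x - f y‖ ≤ _ := h4
        _ = _ := by rw [norm_sub_rev (⨍ w in Metric.ball y ρ₁ ∩ Ω, f w) (f y)]
    rw [hcdef, hgx, hgy]
    have hprod1 : 0 ≤ r ^ θ * |h x| := mul_nonneg hrθ habsx
    have hprod2 : 0 ≤ r ^ θ * |h y| := mul_nonneg hrθ habsy
    have hprod3 : 0 ≤ r ^ θ * K₂ := mul_nonneg hrθ hK₂0
    clear_value d ωn q Cg C0 C1 ρ₁ K K₂ g c f' r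
    have e1 : C1 * (r ^ θ * |h x|) ≤ 2 * (C0 + C1 + 1) * (r ^ θ * |h x|) :=
      mul_le_mul_of_nonneg_right (by linarith) hprod1
    have e2 : C1 * (r ^ θ * |h y|) ≤ 2 * (C0 + C1 + 1) * (r ^ θ * |h y|) :=
      mul_le_mul_of_nonneg_right (by linarith) hprod2
    have e3 : 2 * (r ^ θ * K₂) ≤ 2 * (C0 + C1 + 1) * 2 * (r ^ θ * K₂) :=
      mul_le_mul_of_nonneg_right (by linarith) hprod3
    have hKr : 2 * K ≤ 2 * (r ^ θ * K₂) := by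
      have hcomm : K₂ * r ^ θ = r ^ θ * K₂ := mul_comm _ _
      linarith [hK_le]
    calc ‖f x - f y‖
        ≤ C1 * (r ^ θ * |h x|) + C1 * (r ^ θ * |h y|) + 2 * (r ^ θ * K₂) := by
          linarith [htri, hT1', hT3', hT2]
      _ ≤ 2 * (C0 + C1 + 1) * (r ^ θ * |h x|) + 2 * (C0 + C1 + 1) * (r ^ θ * |h y|)
          + 2 * (C0 + C1 + 1) * 2 * (r ^ θ * K₂) := by linarith [e1, e2, e3]
      _ = 2 * (C0 + C1 + 1) * r ^ θ * (|h x| + K₂ + (|h y| + K₂)) := by ring
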